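/- arXiv:0802.2128 — 3 statements merged into one kernel-verified Lean document; each statement's English description precedes it below -/
import Mathlib

section
/- Let S be a set of perfect double suits over base set A and dimension N, and let T be the smallest collection of pairs of collections of teams that contains S together with the constants 0, 1, and D_ij (i, j < N) and is closed under ¬, +_∅, ·_∅, and C_{n,∅} for all n < N. Then every element of T is a perfect double suit. -/
/-- A team: a set of valuations `Fin N → A`. -/
abbrev Team (A : Type*) (N : ℕ) := Set (Fin N → A)

/-- A pair of collections of teams. -/
abbrev TPair (A : Type*) (N : ℕ) := Set (Team A N) × Set (Team A N)

/-- A suit: a nonempty collection of teams closed under subsets. -/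
def IsSuit {A : Type*} {N : ℕ} (S : Set (Team A N)) : Prop :=
  S.Nonempty ∧ ∀ ⦃V V' : Team A N⦄, V ∈ S → V' ⊆ V → V' ∈ S

/-- A double suit: a pair of suits whose intersection is `{∅}`. -/
def IsDoubleSuit {A : Type*} {N : ℕ} (X : TPair A N) : Prop :=
  IsSuit X.1 ∧ IsSuit X.2 ∧ X.1 ∩ X.2 = {∅}

/-- The pair `(𝒫(V), 𝒫(^N A \ V))`. -/
def perfPair {A : Type*} {N : ℕ} (V : Team A N) : TPair A N :=
  (Set.powerset V, Set.powerset Vᶜ)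

/-- A pair is perfect if it equals `(𝒫(V), 𝒫(^N A \ V))` for some team `V`. -/
def IsPerfect {A : Type*} {N : ℕ} (X : TPair A N) : Prop :=
  ∃ V : Team A N, X = perfPair V

/-- The constant `0 = ({∅}, 𝒫(^N A))`. -/
def zeroP (A : Type*) (N : ℕ) : TPair A N := ({∅}, Set.univ)

/-- The constant `1 = (𝒫(^N A), {∅})`. -/
def oneP (A : Type*) (N : ℕ) : TPair A N := (Set.univ, {∅})

/-- The diagonal element `D_ij`. -/
def diagP (A : Type*) {N : ℕ} (i j : Fin N) : TPair A N :=
  (Set.powerset {a : Fin N → A | a i = a j}, Set.powerset {a : Fin N → A | a i ≠ a j})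

/-- Negation: `¬(X⁺, X⁻) = (X⁻, X⁺)`. -/
def negP {A : Type*} {N : ℕ} (X : TPair A N) : TPair A N := (X.2, X.1)

/-- The operation `+_∅`. -/
def addE {A : Type*} {N : ℕ} (X Y : TPair A N) : TPair A N :=
  ({V | ∃ V₁ ∈ X.1, ∃ V₂ ∈ Y.1, Disjoint V₁ V₂ ∧ V₁ ∪ V₂ = V}, X.2 ∩ Y.2)

/-- The operation `·_∅`. -/
def mulE {A : Type*} {N : ℕ} (X Y : TPair A N) : TPair A N :=
  (X.1 ∩ Y.1, {W | ∃ W₁ ∈ X.2, ∃ W₂ ∈ Y.2, Disjoint W₁ W₂ ∧ W₁ ∪ W₂ = W})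

/-- The `n`-variation of `V` by `f`: `V(n:f) = {a(n:f(a)) : a ∈ V}`. -/
def varF {A : Type*} {N : ℕ} (V : Team A N) (n : Fin N) (f : (Fin N → A) → A) : Team A N :=
  (fun a => Function.update a n (f a)) '' V

/-- `V(n:A) = {a(n:b) : a ∈ V, b ∈ A}`. -/
def varAll {A : Type*} {N : ℕ} (V : Team A N) (n : Fin N) : Team A N :=
  {c | ∃ a ∈ V, ∃ b : A, c = Function.update a n b}

/-- The cylindrification `C_{n,∅}` (every `f : V → A` is independent of `∅`). -/
def cylE {A : Type*} {N : ℕ} (n : Fin N) (X : TPair A N) : TPair A N :=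
  ({V | ∃ f : (Fin N → A) → A, varF V n f ∈ X.1}, {W | varAll W n ∈ X.2})

/-- The smallest collection of pairs containing `S` together with the constants
`0`, `1`, `D_ij`, and closed under `¬`, `+_∅`, `·_∅`, and `C_{n,∅}`. -/
inductive GenE {A : Type*} {N : ℕ} (S : Set (TPair A N)) : TPair A N → Prop
  | base {X : TPair A N} : X ∈ S → GenE S X
  | zero : GenE S (zeroP A N)
  | one : GenE S (oneP A N)
  | diag (i j : Fin N) : GenE S (diagP A i j)
  | neg {X : TPair A N} : GenE S X → GenE S (negP X)
  | add {X Y : TPair A N} : GenE S X → GenE S Y → GenE S (addE X Y)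
  | mul {X Y : TPair A N} : GenE S X → GenE S Y → GenE S (mulE X Y)
  | cyl (n : Fin N) {X : TPair A N} : GenE S X → GenE S (cylE n X)

/- On perfect pairs `(𝒫 V, 𝒫 Vᶜ)` every operation acts through the team `V`: `¬`, `+_∅`, `·_∅`
and `C_{n,∅}` become complement, union, intersection and projection along coordinate `n`
(on the positive side of `C_{n,∅}` the function `f` is a choice of a witness `b` for each
valuation). So by induction every generated pair is perfect, and a perfect pair is a double
suit because `𝒫 V ∩ 𝒫 Vᶜ = 𝒫 ∅ = {∅}`. -/

lemma isSuit_powerset {A : Type*} {N : ℕ} (V : Team A N) : IsSuit (𝒫 V) :=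
  ⟨⟨∅, Set.empty_subset V⟩, fun _ _ hU hU' => hU'.trans hU⟩

lemma isDoubleSuit_perfPair {A : Type*} {N : ℕ} (V : Team A N) :
    IsDoubleSuit (perfPair V) := by
  refine ⟨isSuit_powerset V, isSuit_powerset Vᶜ, ?_⟩
  simp only [perfPair, ← Set.powerset_inter, Set.inter_compl_self, Set.powerset_empty]

lemma zeroP_eq_perfPair (A : Type*) (N : ℕ) : zeroP A N = perfPair (∅ : Team A N) := by
  simp [zeroP, perfPair]

lemma oneP_eq_perfPair (A : Type*) (N : ℕ) : oneP A N = perfPair (Set.univ : Team A N) := by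
  simp [oneP, perfPair]

lemma diagP_eq_perfPair (A : Type*) {N : ℕ} (i j : Fin N) :
    diagP A i j = perfPair {a : Fin N → A | a i = a j} :=
  rfl

lemma negP_perfPair {A : Type*} {N : ℕ} (V : Team A N) :
    negP (perfPair V) = perfPair Vᶜ := by
  simp [negP, perfPair]

lemma addE_perfPair {A : Type*} {N : ℕ} (V W : Team A N) :
    addE (perfPair V) (perfPair W) = perfPair (V ∪ W) := by
  refine Prod.ext (Set.ext fun U => ⟨?_, fun hU => ?_⟩) ?_
  · rintro ⟨V₁, hV₁, V₂, hV₂, -, rfl⟩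
    exact Set.union_subset_union hV₁ hV₂
  · exact ⟨U ∩ V, Set.inter_subset_right, U \ V, Set.sdiff_subset_iff.mpr hU,
      Disjoint.mono_left Set.inter_subset_right disjoint_sdiff_self_right, Set.inter_union_sdiff U V⟩
  · simp [addE, perfPair, Set.compl_union, ← Set.powerset_inter]

lemma mulE_eq_negP_addE {A : Type*} {N : ℕ} (X Y : TPair A N) :
    mulE X Y = negP (addE (negP X) (negP Y)) :=
  rfl

lemma mulE_perfPair {A : Type*} {N : ℕ} (V W : Team A N) :
    mulE (perfPair V) (perfPair W) = perfPair (V ∩ W) := by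
  rw [mulE_eq_negP_addE, negP_perfPair, negP_perfPair, addE_perfPair, negP_perfPair,
    ← Set.compl_inter, compl_compl]

lemma cylE_perfPair {A : Type*} {N : ℕ} (n : Fin N) (V : Team A N) :
    cylE n (perfPair V) = perfPair {a | ∃ b, Function.update a n b ∈ V} := by
  refine Prod.ext (Set.ext fun U => ⟨?_, fun hU => ?_⟩) (Set.ext fun U => ⟨?_, ?_⟩)
  · rintro ⟨f, hf⟩ a ha
    exact ⟨f a, hf ⟨a, ha, rfl⟩⟩
  · have hb : ∀ a, ∃ b, a ∈ U → Function.update a n b ∈ V := by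
      intro a
      by_cases ha : a ∈ U
      · exact (hU ha).imp fun _ hbV _ => hbV
      · exact ⟨a n, fun ha' => absurd ha' ha⟩
    choose f hf using hb
    exact ⟨f, Set.image_subset_iff.mpr fun a ha => hf a ha⟩
  · rintro hU a ha ⟨b, hb⟩
    exact hU ⟨a, ha, b, rfl⟩ hb
  · rintro hU _ ⟨a, ha, b, rfl⟩ hb
    exact hU ha ⟨b, hb⟩

lemma isPerfect_of_genE {A : Type*} {N : ℕ} {S : Set (TPair A N)} (hS : ∀ X ∈ S, IsPerfect X)
    {X : TPair A N} (hX : GenE S X) : IsPerfect X := by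
  induction hX with
  | base h => exact hS _ h
  | zero => exact ⟨∅, zeroP_eq_perfPair A N⟩
  | one => exact ⟨Set.univ, oneP_eq_perfPair A N⟩
  | diag i j => exact ⟨_, diagP_eq_perfPair A i j⟩
  | neg _ ih =>
    obtain ⟨V, rfl⟩ := ih
    exact ⟨Vᶜ, negP_perfPair V⟩
  | add _ _ ihX ihY =>
    obtain ⟨V, rfl⟩ := ihX
    obtain ⟨W, rfl⟩ := ihY
    exact ⟨V ∪ W, addE_perfPair V W⟩
  | mul _ _ ihX ihY =>
    obtain ⟨V, rfl⟩ := ihX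
    obtain ⟨W, rfl⟩ := ihY
    exact ⟨V ∩ W, mulE_perfPair V W⟩
  | cyl n _ ih =>
    obtain ⟨V, rfl⟩ := ih
    exact ⟨_, cylE_perfPair n V⟩

/-- Every element generated from a set of perfect double suits by the
`∅`-operations is a perfect double suit. -/
theorem genE_perfect {A : Type*} {N : ℕ} (S : Set (TPair A N))
    (hS : ∀ X ∈ S, IsDoubleSuit X ∧ IsPerfect X) :
    ∀ X : TPair A N, GenE S X → IsDoubleSuit X ∧ IsPerfect X := by
  intro X hX
  obtain ⟨V, rfl⟩ := isPerfect_of_genE (fun X hX => (hS X hX).2) hX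
  exact ⟨isDoubleSuit_perfPair V, V, rfl⟩
end

section
/- For every IFG_N-formula φ over σ and every σ-structure 𝔄 with universe A, the meaning ‖φ‖_𝔄 = ({V : 𝔄 ⊨⁺ φ[V]}, {W : 𝔄 ⊨⁻ φ[W]}) is a double suit: both coordinates are nonempty and closed under subsets (in particular 𝔄 ⊨⁺ φ[∅] and 𝔄 ⊨⁻ φ[∅], and 𝔄 ⊨± φ[V] together with V' ⊆ V implies 𝔄 ⊨± φ[V']), and the only team that is simultaneously a trump and a cotrump of φ is ∅. -/
open FirstOrder

/-- `a ≈_J b` : the valuations `a` and `b` agree outside of `J`. -/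
def AgreeOutside {A : Type*} {N : ℕ} (J : Set (Fin N)) (a b : Fin N → A) : Prop :=
  ∀ i ∉ J, a i = b i

/-- `V = V₁ ∪_J V₂` : `V₁, V₂` form a `J`-saturated disjoint cover of `V`. -/
def CovJ {A : Type*} {N : ℕ} (J : Set (Fin N)) (V V₁ V₂ : Team A N) : Prop :=
  Disjoint V₁ V₂ ∧ V₁ ∪ V₂ = V ∧
  (∀ a ∈ V₁, ∀ b ∈ V, AgreeOutside J a b → b ∈ V₁) ∧
  (∀ a ∈ V₂, ∀ b ∈ V, AgreeOutside J a b → b ∈ V₂)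

/-- `f` is independent of `J` on `V`. -/
def IndepOn {A : Type*} {N : ℕ} (J : Set (Fin N)) (V : Team A N)
    (f : (Fin N → A) → A) : Prop :=
  ∀ a ∈ V, ∀ b ∈ V, AgreeOutside J a b → f a = f b

/-- IFG_N-formulas over the signature `L`: atomic first-order formulas
(equalities and relations between terms in the variables `v_0, …, v_{N-1}`),
closed under `∼ψ`, `ψ₁ ∨_J ψ₂`, and `∃v_n/J ψ`. -/
inductive IFG (L : Language) (N : ℕ) : Type _
  | equal (t₁ t₂ : L.Term (Fin N)) : IFG L N
  | rel {k : ℕ} (R : L.Relations k) (ts : Fin k → L.Term (Fin N)) : IFG L N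
  | not (φ : IFG L N) : IFG L N
  | or (J : Set (Fin N)) (φ₁ φ₂ : IFG L N) : IFG L N
  | ex (n : Fin N) (J : Set (Fin N)) (φ : IFG L N) : IFG L N

/-- Hodges' trump semantics: `Sat A φ true V` means `𝔄 ⊨⁺ φ[V]` (`V` is a trump),
and `Sat A φ false W` means `𝔄 ⊨⁻ φ[W]` (`W` is a cotrump). -/
def Sat {L : Language} {N : ℕ} (A : Type*) [L.Structure A] :
    IFG L N → Bool → Team A N → Prop
  | .equal t₁ t₂, true, V => ∀ a ∈ V, t₁.realize a = t₂.realize a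
  | .equal t₁ t₂, false, W => ∀ a ∈ W, t₁.realize a ≠ t₂.realize a
  | .rel R ts, true, V => ∀ a ∈ V, Language.Structure.RelMap R (fun i => (ts i).realize a)
  | .rel R ts, false, W => ∀ a ∈ W, ¬ Language.Structure.RelMap R (fun i => (ts i).realize a)
  | .not φ, b, V => Sat A φ (!b) V
  | .or J φ₁ φ₂, true, V =>
      ∃ V₁ V₂, CovJ J V V₁ V₂ ∧ Sat A φ₁ true V₁ ∧ Sat A φ₂ true V₂
  | .or _ φ₁ φ₂, false, W => Sat A φ₁ false W ∧ Sat A φ₂ false W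
  | .ex n J φ, true, V =>
      ∃ f : (Fin N → A) → A, IndepOn J V f ∧ Sat A φ true (varF V n f)
  | .ex n _ φ, false, W => Sat A φ false (varAll W n)

/-- The meaning `‖φ‖_𝔄 = ({V : 𝔄 ⊨⁺ φ[V]}, {W : 𝔄 ⊨⁻ φ[W]})`. -/
def meaning {L : Language} {N : ℕ} (A : Type*) [L.Structure A] (φ : IFG L N) :
    TPair A N :=
  ({V | Sat A φ true V}, {W | Sat A φ false W})

/-- An IFG-formula is perfect if all of its slash sets are empty. -/
def IFG.Perfect {L : Language} {N : ℕ} : IFG L N → Prop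
  | .equal _ _ => True
  | .rel _ _ => True
  | .not φ => φ.Perfect
  | .or J φ₁ φ₂ => J = ∅ ∧ φ₁.Perfect ∧ φ₂.Perfect
  | .ex _ J φ => J = ∅ ∧ φ.Perfect

/-- The perfection `φ_∅` of `φ`: replace every slash set by `∅`. -/
def IFG.perfection {L : Language} {N : ℕ} : IFG L N → IFG L N
  | .equal t₁ t₂ => .equal t₁ t₂
  | .rel R ts => .rel R ts
  | .not φ => .not φ.perfection
  | .or _ φ₁ φ₂ => .or ∅ φ₁.perfection φ₂.perfection
  | .ex n _ φ => .ex n ∅ φ.perfection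

/-! All three properties are proved by induction on `φ`. Trumps and cotrumps are closed under
subsets because `J`-saturated covers, `J`-independent functions and both kinds of variation restrict
along `V' ⊆ V`. A team `V` that is both a trump and a cotrump is empty: for `ψ₁ ∨_J ψ₂` each part `Vᵢ`
of the cover is a trump of `ψᵢ` and, by downward closure, a cotrump of `ψᵢ`; for `∃v_n/J ψ` the team
`V(n:f)` is a trump of `ψ` contained in the cotrump `V(n:A)`, and it is empty only if `V` is. -/

section Teams

variable {A : Type*} {N : ℕ}

lemma varF_empty (n : Fin N) (f : (Fin N → A) → A) : varF ∅ n f = ∅ :=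
  Set.image_empty _

lemma varF_eq_empty_iff {V : Team A N} {n : Fin N} {f : (Fin N → A) → A} :
    varF V n f = ∅ ↔ V = ∅ :=
  Set.image_eq_empty

lemma varF_mono {V V' : Team A N} (h : V' ⊆ V) (n : Fin N) (f : (Fin N → A) → A) :
    varF V' n f ⊆ varF V n f :=
  Set.image_mono h

lemma varAll_empty (n : Fin N) : varAll (∅ : Team A N) n = ∅ := by
  simp [varAll]

lemma varAll_mono {V V' : Team A N} (h : V' ⊆ V) (n : Fin N) : varAll V' n ⊆ varAll V n := by
  rintro c ⟨a, ha, b, rfl⟩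
  exact ⟨a, h ha, b, rfl⟩

lemma varF_subset_varAll (V : Team A N) (n : Fin N) (f : (Fin N → A) → A) :
    varF V n f ⊆ varAll V n := by
  rintro c ⟨a, ha, rfl⟩
  exact ⟨a, ha, f a, rfl⟩

lemma IndepOn.mono {J : Set (Fin N)} {V V' : Team A N} {f : (Fin N → A) → A}
    (hf : IndepOn J V f) (h : V' ⊆ V) : IndepOn J V' f :=
  fun a ha b hb hab => hf a (h ha) b (h hb) hab

lemma covJ_empty (J : Set (Fin N)) : CovJ J (∅ : Team A N) ∅ ∅ := by
  simp [CovJ]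

lemma CovJ.left_subset {J : Set (Fin N)} {V V₁ V₂ : Team A N} (h : CovJ J V V₁ V₂) : V₁ ⊆ V :=
  h.2.1 ▸ Set.subset_union_left

lemma CovJ.right_subset {J : Set (Fin N)} {V V₁ V₂ : Team A N} (h : CovJ J V V₁ V₂) : V₂ ⊆ V :=
  h.2.1 ▸ Set.subset_union_right

lemma CovJ.inter {J : Set (Fin N)} {V V₁ V₂ V' : Team A N} (h : CovJ J V V₁ V₂) (hV' : V' ⊆ V) :
    CovJ J V' (V₁ ∩ V') (V₂ ∩ V') := by
  obtain ⟨hdisj, hunion, hsat₁, hsat₂⟩ := h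
  refine ⟨hdisj.mono Set.inter_subset_left Set.inter_subset_left, ?_, ?_, ?_⟩
  · rw [← Set.union_inter_distrib_right, hunion, Set.inter_eq_right.mpr hV']
  · rintro a ⟨ha, -⟩ b hb hab
    exact ⟨hsat₁ a ha b (hunion ▸ hV' hb) hab, hb⟩
  · rintro a ⟨ha, -⟩ b hb hab
    exact ⟨hsat₂ a ha b (hunion ▸ hV' hb) hab, hb⟩

end Teams

section Semantics

variable {L : Language} {N : ℕ} (A : Type*) [L.Structure A]

lemma sat_empty (φ : IFG L N) (b : Bool) : Sat A φ b ∅ := by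
  induction φ generalizing b with
  | equal | rel => cases b <;> exact fun _ ha => ha.elim
  | not φ ih => exact ih _
  | or J φ₁ φ₂ ih₁ ih₂ =>
    cases b
    · exact ⟨ih₁ false, ih₂ false⟩
    · exact ⟨∅, ∅, covJ_empty J, ih₁ true, ih₂ true⟩
  | ex n J φ ih =>
    cases b
    · show Sat A φ false (varAll ∅ n)
      rw [varAll_empty]
      exact ih false
    · refine ⟨fun a => a n, fun _ ha => ha.elim, ?_⟩
      rw [varF_empty]
      exact ih true

variable {A}

lemma Sat.mono {φ : IFG L N} {b : Bool} {V V' : Team A N} (hV : Sat A φ b V) (h : V' ⊆ V) :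
    Sat A φ b V' := by
  induction φ generalizing b V V' with
  | equal | rel => cases b <;> exact fun a ha => hV a (h ha)
  | not φ ih => exact ih hV h
  | or J φ₁ φ₂ ih₁ ih₂ =>
    cases b
    · exact ⟨ih₁ hV.1 h, ih₂ hV.2 h⟩
    · obtain ⟨V₁, V₂, hcov, h₁, h₂⟩ := hV
      exact ⟨V₁ ∩ V', V₂ ∩ V', hcov.inter h,
        ih₁ h₁ Set.inter_subset_left, ih₂ h₂ Set.inter_subset_left⟩
  | ex n J φ ih =>
    cases b
    · exact ih hV (varAll_mono h n)
    · obtain ⟨f, hf, hsat⟩ := hV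
      exact ⟨f, hf.mono h, ih hsat (varF_mono h n f)⟩

lemma eq_empty_of_sat_true_of_sat_false {φ : IFG L N} {V : Team A N}
    (ht : Sat A φ true V) (hf : Sat A φ false V) : V = ∅ := by
  induction φ generalizing V with
  | equal | rel => exact Set.eq_empty_of_forall_notMem fun a ha => hf a ha (ht a ha)
  | not φ ih => exact ih hf ht
  | or J φ₁ φ₂ ih₁ ih₂ =>
    obtain ⟨V₁, V₂, hcov, h₁, h₂⟩ := ht
    have e₁ : V₁ = ∅ := ih₁ h₁ (hf.1.mono hcov.left_subset)
    have e₂ : V₂ = ∅ := ih₂ h₂ (hf.2.mono hcov.right_subset)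
    rw [← hcov.2.1, e₁, e₂, Set.union_empty]
  | ex n J φ ih =>
    obtain ⟨f, -, hsat⟩ := ht
    exact varF_eq_empty_iff.mp (ih hsat (Sat.mono hf (varF_subset_varAll V n f)))

end Semantics

/-- The meaning of any IFG-formula is a double suit: the collections of trumps
and of cotrumps are both nonempty and closed under subsets (in particular
`𝔄 ⊨⁺ φ[∅]`, `𝔄 ⊨⁻ φ[∅]`, and `𝔄 ⊨± φ[V]` with `V' ⊆ V` implies
`𝔄 ⊨± φ[V']`), and the only team that is both a trump and a cotrump is `∅`. -/
theorem meaning_isDoubleSuit {L : Language} {N : ℕ} (A : Type*) [L.Structure A]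
    (φ : IFG L N) : IsDoubleSuit (meaning A φ) := by
  refine ⟨⟨⟨∅, sat_empty A φ true⟩, fun _ _ hV h => Sat.mono hV h⟩,
    ⟨⟨∅, sat_empty A φ false⟩, fun _ _ hV h => Sat.mono hV h⟩, ?_⟩
  ext V
  constructor
  · rintro ⟨ht, hf⟩
    exact eq_empty_of_sat_true_of_sat_false ht hf
  · rintro rfl
    exact ⟨sat_empty A φ true, sat_empty A φ false⟩
end

section
/- Let φ be a perfect IFG_N-formula over σ (every slash set occurring in φ is ∅) and 𝔄 a σ-structure with universe A. Then for every valuation a ∈ ^N A, exactly one of 𝔄 ⊨⁺ φ[{a}] and 𝔄 ⊨⁻ φ[{a}] holds (perfect formulas are determined on singleton teams). -/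
open FirstOrder

/-!
With empty slash sets, every disjoint cover of a team is `∅`-saturated and every choice
function is `∅`-independent, so trump semantics collapses pointwise onto Tarski semantics:
a perfect formula is *flat*, i.e. `V` is a trump (cotrump) of `φ` iff every valuation in `V`
satisfies (falsifies) `φ` classically. On a singleton team, excluded middle for the one
valuation then gives exactly one of the two.
-/

def TarskiSat {L : Language} {N : ℕ} (A : Type*) [L.Structure A] :
    IFG L N → (Fin N → A) → Prop
  | .equal t₁ t₂, a => t₁.realize a = t₂.realize a
  | .rel R ts, a => Language.Structure.RelMap R (fun i => (ts i).realize a)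
  | .not φ, a => ¬ TarskiSat A φ a
  | .or _ φ₁ φ₂, a => TarskiSat A φ₁ a ∨ TarskiSat A φ₂ a
  | .ex n _ φ, a => ∃ b : A, TarskiSat A φ (Function.update a n b)

section Teams

variable {A : Type*} {N : ℕ}

lemma AgreeOutside.eq_of_empty {a b : Fin N → A} (h : AgreeOutside ∅ a b) : a = b :=
  funext fun i => h i (Set.notMem_empty i)

lemma indepOn_empty (V : Team A N) (f : (Fin N → A) → A) : IndepOn ∅ V f :=
  fun _ _ _ _ hab => congrArg f hab.eq_of_empty

lemma covJ_empty_sep (V : Team A N) (p : (Fin N → A) → Prop) :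
    CovJ ∅ V {a ∈ V | p a} {a ∈ V | ¬ p a} := by
  refine ⟨?_, by rw [← Set.sep_or]; simp only [em, Set.sep_true], ?_, ?_⟩
  · exact Set.disjoint_left.mpr fun _ ha ha' => ha'.2 ha.2
  all_goals
    rintro a ⟨-, ha⟩ b hb hab
    exact ⟨hb, hab.eq_of_empty ▸ ha⟩

lemma exists_forall_mem_varF_iff (V : Team A N) (n : Fin N) (P : (Fin N → A) → Prop) :
    (∃ f, ∀ c ∈ varF V n f, P c) ↔ ∀ a ∈ V, ∃ b, P (Function.update a n b) := by
  constructor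
  · rintro ⟨f, hf⟩ a ha
    exact ⟨f a, hf _ ⟨a, ha, rfl⟩⟩
  · intro h
    have h' : ∀ a, ∃ b, a ∈ V → P (Function.update a n b) := fun a =>
      (em (a ∈ V)).elim (fun ha => (h a ha).imp fun _ hb _ => hb)
        (fun ha => ⟨a n, fun ha' => absurd ha' ha⟩)
    choose f hf using h'
    exact ⟨f, by rintro c ⟨a, ha, rfl⟩; exact hf a ha⟩

lemma forall_mem_varAll_iff (W : Team A N) (n : Fin N) (P : (Fin N → A) → Prop) :
    (∀ c ∈ varAll W n, P c) ↔ ∀ a ∈ W, ∀ b, P (Function.update a n b) := by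
  constructor
  · intro h a ha b
    exact h _ ⟨a, ha, b, rfl⟩
  · rintro h c ⟨a, ha, b, rfl⟩
    exact h a ha b

end Teams

section Flatness

variable {L : Language} {N : ℕ} {A : Type*} [L.Structure A]

lemma sat_or_empty_true_iff {φ₁ φ₂ : IFG L N} {P₁ P₂ : (Fin N → A) → Prop}
    (h₁ : ∀ V, Sat A φ₁ true V ↔ ∀ a ∈ V, P₁ a) (h₂ : ∀ V, Sat A φ₂ true V ↔ ∀ a ∈ V, P₂ a)
    (V : Team A N) : Sat A (.or ∅ φ₁ φ₂) true V ↔ ∀ a ∈ V, P₁ a ∨ P₂ a := by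
  simp only [Sat, h₁, h₂]
  constructor
  · rintro ⟨V₁, V₂, ⟨-, rfl, -, -⟩, s₁, s₂⟩ a (ha | ha)
    exacts [Or.inl (s₁ a ha), Or.inr (s₂ a ha)]
  · intro h
    exact ⟨_, _, covJ_empty_sep V P₁, fun a ha => ha.2,
      fun a ha => (h a ha.1).resolve_left ha.2⟩

theorem IFG.Perfect.sat_iff {φ : IFG L N} (hφ : φ.Perfect) (V : Team A N) :
    (Sat A φ true V ↔ ∀ a ∈ V, TarskiSat A φ a) ∧
    (Sat A φ false V ↔ ∀ a ∈ V, ¬ TarskiSat A φ a) := by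
  induction φ generalizing V with
  | equal t₁ t₂ => exact ⟨Iff.rfl, Iff.rfl⟩
  | rel R ts => exact ⟨Iff.rfl, Iff.rfl⟩
  | not ψ ih =>
    obtain ⟨htrue, hfalse⟩ := ih hφ V
    refine ⟨hfalse, ?_⟩
    simpa only [Sat, TarskiSat, Bool.not_false, Bool.not_true, not_not] using htrue
  | or J φ₁ φ₂ ih₁ ih₂ =>
    obtain ⟨rfl, hφ₁, hφ₂⟩ := hφ
    refine ⟨sat_or_empty_true_iff (fun V => (ih₁ hφ₁ V).1) (fun V => (ih₂ hφ₂ V).1) V, ?_⟩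
    simp only [Sat, TarskiSat, (ih₁ hφ₁ V).2, (ih₂ hφ₂ V).2, not_or]
    exact forall₂_and.symm
  | ex n J ψ ih =>
    obtain ⟨rfl, hψ⟩ := hφ
    simp only [Sat, TarskiSat, (ih hψ _).1, (ih hψ _).2, indepOn_empty, true_and,
      exists_forall_mem_varF_iff, forall_mem_varAll_iff, not_exists, and_self]

end Flatness

/-- Perfect formulas are determined on singleton teams: for each valuation `a`,
exactly one of `𝔄 ⊨⁺ φ[{a}]` and `𝔄 ⊨⁻ φ[{a}]` holds. -/
theorem perfect_determined {L : Language} {N : ℕ} (A : Type*) [L.Structure A]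
    (φ : IFG L N) (hφ : φ.Perfect) (a : Fin N → A) :
    Xor' (Sat A φ true {a}) (Sat A φ false {a}) := by
  obtain ⟨htrue, hfalse⟩ := hφ.sat_iff (A := A) {a}
  simp only [Set.mem_singleton_iff, forall_eq] at htrue hfalse
  rw [htrue, hfalse]
  tauto
end
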